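/- arXiv:2403.12909 — 3 statements merged into one kernel-verified Lean document; each statement's English description precedes it below -/
import Mathlib

section
/- There exists a constant c > 0 such that for all α, α₀ ∈ (0, π) with |α − α₀| sufficiently small, (sin α₀ (1 − cos h) + cos α₀ (h − sin h)) / (h² sin²((α + α₀)/2)) ≤ c / sin α₀, where h = α − α₀. -/
open Real Set

/-!
Write `h = α - α₀` and `m = (α + α₀) / 2`. Since `1 - cos h ≤ h² / 2` and `|h - sin h| ≤ |h|³ / 6`,
the numerator is at most `sin α₀ · h² / 2 + |h|³ / 6`. Both `sin α₀` and `|h|` are at most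
`π sin m`: each is bounded by twice the distance of `m` to `{0, π}`, and by Jordan's inequality that
distance is at most `(π / 2) sin m`. Multiplying the numerator by `sin α₀` therefore costs at most
`π² h² sin² m`, so `c = π²` works.
-/

namespace Real

lemma two_div_pi_mul_min_le_sin {x : ℝ} (hx : x ∈ Icc 0 π) : 2 / π * min x (π - x) ≤ sin x := by
  have hπ : 0 ≤ 2 / π := by positivity
  rcases le_total x (π / 2) with hle | hge
  · exact (mul_le_mul_of_nonneg_left (min_le_left _ _) hπ).trans (mul_le_sin hx.1 hle)
  · calc 2 / π * min x (π - x) ≤ 2 / π * (π - x) := mul_le_mul_of_nonneg_left (min_le_right _ _) hπ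
      _ ≤ sin (π - x) := mul_le_sin (by linarith [hx.2]) (by linarith)
      _ = sin x := sin_pi_sub x

lemma le_pi_mul_sin_of_le_two_mul {t m : ℝ} (hm : m ∈ Icc 0 π) (ht : t ≤ 2 * m)
    (ht' : t ≤ 2 * (π - m)) : t ≤ π * sin m := by
  have hmin : t ≤ 2 * min m (π - m) := by rw [mul_min_of_nonneg _ _ zero_le_two]; exact le_min ht ht'
  have hJ := two_div_pi_mul_min_le_sin hm
  rw [div_mul_eq_mul_div, div_le_iff₀ pi_pos] at hJ
  linarith

lemma midpoint_mem_Icc_zero_pi {x y : ℝ} (hx : x ∈ Icc 0 π) (hy : y ∈ Icc 0 π) :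
    (x + y) / 2 ∈ Icc 0 π :=
  ⟨by linarith [hx.1, hy.1], by linarith [hx.2, hy.2]⟩

lemma sin_le_pi_mul_sin_midpoint {x y : ℝ} (hx : x ∈ Icc 0 π) (hy : y ∈ Icc 0 π) :
    sin x ≤ π * sin ((x + y) / 2) := by
  have hsin : sin x ≤ π - x := by simpa only [sin_pi_sub] using sin_le (sub_nonneg.2 hx.2)
  refine le_pi_mul_sin_of_le_two_mul (midpoint_mem_Icc_zero_pi hx hy) ?_ ?_ <;>
    linarith [sin_le hx.1, hy.1, hy.2]

lemma abs_sub_le_pi_mul_sin_midpoint {x y : ℝ} (hx : x ∈ Icc 0 π) (hy : y ∈ Icc 0 π) :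
    |x - y| ≤ π * sin ((x + y) / 2) := by
  refine le_pi_mul_sin_of_le_two_mul (midpoint_mem_Icc_zero_pi hx hy) ?_ ?_ <;>
    exact abs_le.2 ⟨by linarith [hx.1, hx.2, hy.1, hy.2], by linarith [hx.1, hx.2, hy.1, hy.2]⟩

lemma sin_mul_one_sub_cos_add_cos_mul_sub_sin_le {a : ℝ} (ha : 0 ≤ sin a) (h : ℝ) :
    sin a * (1 - cos h) + cos a * (h - sin h) ≤ sin a * (h ^ 2 / 2) + |h| ^ 3 / 6 := by
  have hcos : 1 - cos h ≤ h ^ 2 / 2 := by linarith [one_sub_sq_div_two_le_cos (x := h)]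
  have hsin : cos a * (h - sin h) ≤ |h| ^ 3 / 6 :=
    calc cos a * (h - sin h) ≤ |cos a| * |h - sin h| := (le_abs_self _).trans (abs_mul _ _).le
      _ ≤ 1 * (|h| ^ 3 / 6) :=
        mul_le_mul (abs_cos_le_one a) (abs_sub_sin_le h) (abs_nonneg _) zero_le_one
      _ = |h| ^ 3 / 6 := one_mul _
  linarith [mul_le_mul_of_nonneg_left hcos ha]

lemma sin_mul_one_sub_cos_add_cos_mul_sub_sin_mul_sin_le {a h S : ℝ} (ha : 0 ≤ sin a)
    (haS : sin a ≤ π * S) (hS : |h| ≤ π * S) :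
    (sin a * (1 - cos h) + cos a * (h - sin h)) * sin a ≤ π ^ 2 * (h ^ 2 * S ^ 2) := by
  have habs : |h| ^ 2 = h ^ 2 := sq_abs h
  have hsq : sin a ^ 2 ≤ (π * S) ^ 2 := pow_le_pow_left₀ ha haS 2
  have hmul : sin a * |h| ≤ (π * S) ^ 2 := by
    rw [sq]; exact mul_le_mul haS hS (abs_nonneg h) (ha.trans haS)
  calc (sin a * (1 - cos h) + cos a * (h - sin h)) * sin a
      ≤ (sin a * (h ^ 2 / 2) + |h| ^ 3 / 6) * sin a :=
        mul_le_mul_of_nonneg_right (sin_mul_one_sub_cos_add_cos_mul_sub_sin_le ha h) ha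
    _ = (sin a ^ 2 / 2 + sin a * |h| / 6) * h ^ 2 := by rw [← habs]; ring
    _ ≤ ((π * S) ^ 2 / 2 + (π * S) ^ 2 / 6) * h ^ 2 := by gcongr
    _ ≤ π ^ 2 * (h ^ 2 * S ^ 2) := by nlinarith [sq_nonneg (π * S * h)]

end Real

/-- There are absolute constants `c, δ > 0` such that for all `α, α₀ ∈ (0, π)` with
`|α − α₀| ≤ δ`, setting `h = α − α₀`,
`(sin α₀ (1 − cos h) + cos α₀ (h − sin h)) / (h² sin²((α+α₀)/2)) ≤ c / sin α₀`. -/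
theorem key_estimate :
    ∃ c > (0:ℝ), ∃ δ > (0:ℝ), ∀ α α₀ : ℝ, α ∈ Set.Ioo 0 π → α₀ ∈ Set.Ioo 0 π →
      |α - α₀| ≤ δ →
      (Real.sin α₀ * (1 - Real.cos (α - α₀))
          + Real.cos α₀ * ((α - α₀) - Real.sin (α - α₀))) /
        ((α - α₀) ^ 2 * (Real.sin ((α + α₀) / 2)) ^ 2)
      ≤ c / Real.sin α₀ := by
  refine ⟨π ^ 2, by positivity, 1, one_pos, fun α α₀ hα hα₀ _ => ?_⟩
  have hs : 0 < sin α₀ := sin_pos_of_pos_of_lt_pi hα₀.1 hα₀.2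
  have hsin : sin α₀ ≤ π * sin ((α + α₀) / 2) := by
    rw [add_comm α α₀]
    exact sin_le_pi_mul_sin_midpoint (Ioo_subset_Icc_self hα₀) (Ioo_subset_Icc_self hα)
  have hdist := abs_sub_le_pi_mul_sin_midpoint (Ioo_subset_Icc_self hα) (Ioo_subset_Icc_self hα₀)
  -- this form also covers `α = α₀`, where the quotient is the junk value `0 / 0 = 0`
  refine div_le_of_le_mul₀ (by positivity) (by positivity) ?_
  rw [div_mul_eq_mul_div, le_div_iff₀ hs]
  exact sin_mul_one_sub_cos_add_cos_mul_sub_sin_mul_sin_le hs.le hsin hdist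
end

section
/- Let I ⊂ ℝ be an interval on which sin α ≠ 0 in the interior, let α₀ ∈ I with sin α₀ ≠ 0, and define f(α) = sin α − sin α₀ − cos α₀ (α − α₀). Then there exists an absolute constant c > 0 such that for all α ∈ I, |f(α)| / (f'(α))² ≤ c / |f''(α₀)|. -/
/-! Write `α = a + b`, `α₀ = a - b`. Then
`f(α) = 2 cos a (sin b - b cos b) - 2 b sin a sin b` and `(cos α - cos α₀)² = 4 sin² a sin² b`.
If `sin α sin α₀ ≥ 0`, the identity `sin α sin α₀ = sin² a - sin² b` gives `|sin b| ≤ |sin a|`,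
and `sin α + sin α₀ = 2 sin a cos b` gives `|sin α₀| ≤ 2 |sin a|`. If moreover `|b| ≤ π / 2`, then
`|b| ≤ (π / 2) |sin b|`, so the cubic term `|sin b - b cos b| ≤ (2/3) |b|³` is also of size
`|sin a| sin² b`. An interval on whose interior `sin` does not vanish lies in some `[nπ, (n+1)π]`,
where both conditions hold. -/

open Real Set

namespace Real

lemma abs_sin_sub_mul_cos_le (x : ℝ) : |sin x - x * cos x| ≤ 2 / 3 * |x| ^ 3 := by
  have hcos : |x - x * cos x| ≤ |x| ^ 3 / 2 := by
    rw [← mul_one_sub, abs_mul, abs_of_nonneg (sub_nonneg.2 (cos_le_one x))]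
    calc |x| * (1 - cos x) ≤ |x| * (x ^ 2 / 2) := by
          gcongr; linarith [one_sub_sq_div_two_le_cos (x := x)]
      _ = |x| ^ 3 / 2 := by rw [← sq_abs x]; ring
  calc |sin x - x * cos x| = |(x - x * cos x) - (x - sin x)| := by ring_nf
    _ ≤ |x - x * cos x| + |x - sin x| := abs_sub _ _
    _ ≤ 2 / 3 * |x| ^ 3 := by linarith [abs_sub_sin_le x]

lemma sin_add_mul_sin_sub (a b : ℝ) : sin (a + b) * sin (a - b) = sin a ^ 2 - sin b ^ 2 := by
  rw [sin_add, sin_sub]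
  linear_combination sin a ^ 2 * sin_sq_add_cos_sq b - sin b ^ 2 * sin_sq_add_cos_sq a

lemma sin_add_add_sin_sub (a b : ℝ) : sin (a + b) + sin (a - b) = 2 * sin a * cos b := by
  rw [sin_add, sin_sub]; ring

lemma cos_add_sub_cos_sub_sq (a b : ℝ) :
    (cos (a + b) - cos (a - b)) ^ 2 = 4 * sin a ^ 2 * sin b ^ 2 := by
  rw [cos_add, cos_sub]; ring

lemma abs_sin_le_abs_sin_of_sin_add_mul_sin_sub_nonneg {a b : ℝ}
    (h : 0 ≤ sin (a + b) * sin (a - b)) : |sin b| ≤ |sin a| :=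
  sq_le_sq.1 (by linarith [sin_add_mul_sin_sub a b])

lemma abs_sin_sub_le_of_sin_add_mul_sin_sub_nonneg {a b : ℝ}
    (h : 0 ≤ sin (a + b) * sin (a - b)) : |sin (a - b)| ≤ 2 * |sin a| :=
  calc |sin (a - b)| ≤ |sin (a + b) + sin (a - b)| := sq_le_sq.1 (by nlinarith)
    _ = 2 * |sin a| * |cos b| := by rw [sin_add_add_sin_sub, abs_mul, abs_mul, abs_two]
    _ ≤ 2 * |sin a| := mul_le_of_le_one_right (by positivity) (abs_cos_le_one b)

lemma sin_add_sub_sin_sub_sub_cos_sub_mul (a b : ℝ) :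
    sin (a + b) - sin (a - b) - cos (a - b) * (2 * b)
      = 2 * cos a * (sin b - b * cos b) - 2 * b * sin a * sin b := by
  rw [sin_add, sin_sub, cos_sub]; ring

lemma abs_sin_add_sub_sin_sub_sub_cos_sub_mul_le {a b : ℝ} (hb : |b| ≤ π / 2)
    (hab : |sin b| ≤ |sin a|) :
    |sin (a + b) - sin (a - b) - cos (a - b) * (2 * b)|
      ≤ (π ^ 3 / 6 + π) * |sin a| * sin b ^ 2 := by
  have hπ := pi_pos
  have hb_le : |b| ≤ π / 2 * |sin b| := by
    calc |b| = π / 2 * (2 / π * |b|) := by field_simp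
      _ ≤ π / 2 * |sin b| := by gcongr; exact mul_abs_le_abs_sin hb
  have hcube : |b| ^ 3 ≤ (π / 2) ^ 3 * |sin a| * sin b ^ 2 := by
    rw [← sq_abs (sin b)]
    calc |b| ^ 3 ≤ (π / 2 * |sin b|) ^ 3 := by gcongr
      _ = (π / 2) ^ 3 * |sin b| * |sin b| ^ 2 := by ring
      _ ≤ (π / 2) ^ 3 * |sin a| * |sin b| ^ 2 := by gcongr
  rw [sin_add_sub_sin_sub_sub_cos_sub_mul]
  calc |2 * cos a * (sin b - b * cos b) - 2 * b * sin a * sin b|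
      ≤ 2 * |cos a| * |sin b - b * cos b| + 2 * |b| * |sin a| * |sin b| := by
        refine (abs_sub _ _).trans_eq ?_
        simp only [abs_mul, abs_two]
    _ ≤ 2 * 1 * (2 / 3 * |b| ^ 3) + 2 * (π / 2 * |sin b|) * |sin a| * |sin b| := by
        gcongr
        · exact abs_cos_le_one a
        · exact abs_sin_sub_mul_cos_le b
    _ ≤ (π ^ 3 / 6 + π) * |sin a| * sin b ^ 2 := by
        rw [← sq_abs (sin b)] at hcube ⊢
        nlinarith

theorem abs_sin_mul_abs_sin_sub_sin_sub_cos_mul_le {α α₀ : ℝ} (hα : |α - α₀| ≤ π)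
    (hsin : 0 ≤ sin α * sin α₀) :
    |sin α₀| * |sin α - sin α₀ - cos α₀ * (α - α₀)|
      ≤ (π ^ 3 / 12 + π / 2) * (cos α - cos α₀) ^ 2 := by
  obtain ⟨a, b, rfl, rfl⟩ : ∃ a b, α = a + b ∧ α₀ = a - b :=
    ⟨(α + α₀) / 2, (α - α₀) / 2, by ring, by ring⟩
  rw [show a + b - (a - b) = 2 * b by ring, abs_mul, abs_two] at *
  have hb : |b| ≤ π / 2 := by linarith
  rw [cos_add_sub_cos_sub_sq, ← sq_abs (sin a)]
  calc |sin (a - b)| * |sin (a + b) - sin (a - b) - cos (a - b) * (2 * b)|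
      ≤ 2 * |sin a| * ((π ^ 3 / 6 + π) * |sin a| * sin b ^ 2) := by
        gcongr
        · exact abs_sin_sub_le_of_sin_add_mul_sin_sub_nonneg hsin
        · exact abs_sin_add_sub_sin_sub_sub_cos_sub_mul_le hb
            (abs_sin_le_abs_sin_of_sin_add_mul_sin_sub_nonneg hsin)
    _ = (π ^ 3 / 12 + π / 2) * (4 * |sin a| ^ 2 * sin b ^ 2) := by ring

lemma exists_Icc_subset_Icc_int_mul_pi {a b : ℝ} (h : ∀ x ∈ Ioo a b, sin x ≠ 0) :
    ∃ n : ℤ, Icc a b ⊆ Icc (n * π) ((n + 1) * π) := by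
  have hπ := pi_pos
  refine ⟨⌊a / π⌋, fun x hx => ⟨?_, ?_⟩⟩
  · calc (⌊a / π⌋ : ℝ) * π ≤ a / π * π := by gcongr; exact Int.floor_le _
      _ = a := div_mul_cancel₀ a hπ.ne'
      _ ≤ x := hx.1
  · have ha : a < (⌊a / π⌋ + 1) * π := by
      rw [← div_lt_iff₀ hπ]; exact Int.lt_floor_add_one _
    refine hx.2.trans (not_lt.1 fun hb => h _ ⟨ha, hb⟩ ?_)
    exact_mod_cast sin_int_mul_pi (⌊a / π⌋ + 1)

lemma sin_mul_sin_nonneg_of_mem_Icc {n : ℤ} {x y : ℝ} (hx : x ∈ Icc (n * π) ((n + 1) * π))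
    (hy : y ∈ Icc (n * π) ((n + 1) * π)) : 0 ≤ sin x * sin y := by
  have hsin : ∀ z ∈ Icc (n * π) ((n + 1) * π), sin z = (-1) ^ n * sin (z - n * π) ∧
      0 ≤ sin (z - n * π) := fun z hz =>
    ⟨by rw [← sin_add_int_mul_pi, sub_add_cancel],
      sin_nonneg_of_nonneg_of_le_pi (by linarith [hz.1]) (by linarith [hz.2])⟩
  obtain ⟨hx, hx₀⟩ := hsin x hx
  obtain ⟨hy, hy₀⟩ := hsin y hy
  rw [hx, hy, mul_mul_mul_comm, ← mul_zpow, neg_one_mul, neg_neg, one_zpow, one_mul]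
  exact mul_nonneg hx₀ hy₀

end Real

/-- Lemma B.2: there is an absolute constant `c > 0` (independent of the interval and `α₀`)
such that for any interval `[a,b]` with `sin α ≠ 0` in its interior, any `α₀ ∈ [a,b]` with
`sin α₀ ≠ 0`, and `f(α) = sin α − sin α₀ − cos α₀ (α − α₀)`, one has
`|f(α)| ≤ (c/|sin α₀|) (f'(α))²`, i.e. `|f(α)| ≤ (c/|f''(α₀)|)(cos α − cos α₀)²` on `[a,b]`. -/
theorem aux_f_bound :
    ∃ c > (0:ℝ), ∀ a b α₀ : ℝ, a ≤ b →
      (∀ α ∈ Set.Ioo a b, Real.sin α ≠ 0) →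
      α₀ ∈ Set.Icc a b → Real.sin α₀ ≠ 0 →
      ∀ α ∈ Set.Icc a b,
        |Real.sin α - Real.sin α₀ - Real.cos α₀ * (α - α₀)|
          ≤ c / |Real.sin α₀| * (Real.cos α - Real.cos α₀) ^ 2 := by
  refine ⟨π ^ 3 / 12 + π / 2, by positivity, fun a b α₀ _ hsin hα₀ hs α hα => ?_⟩
  obtain ⟨n, hsub⟩ := exists_Icc_subset_Icc_int_mul_pi hsin
  have hdist : |α - α₀| ≤ π := by
    obtain ⟨h₁, h₂⟩ := hsub hα
    obtain ⟨h₃, h₄⟩ := hsub hα₀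
    exact abs_sub_le_iff.2 ⟨by linarith, by linarith⟩
  have key := abs_sin_mul_abs_sin_sub_sin_sub_cos_mul_le hdist
    (sin_mul_sin_nonneg_of_mem_Icc (hsub hα) (hsub hα₀))
  rw [div_mul_eq_mul_div, le_div_iff₀ (abs_pos.2 hs)]
  linarith
end

section
/- Let φ : ℝ → ℝ be a nonzero compactly supported C¹ function, let x̌₁, …, x̌_K ∈ ℝ² be distinct, let Ω ⊂ [0, 2π] be a nonempty open set, and let θ ∈ ℝ^K. If Σ_{i=1}^K θ_i φ'(p + α⃗·x̌_i) = 0 for all p ∈ ℝ and all α ∈ Ω (where α⃗ = (cos α, sin α)), and φ' is not identically zero, then θ = 0. -/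
/-!
For an angle `α` outside a countable set the projections `α⃗·x̌ᵢ` are pairwise distinct, and
since `Ω` is open and nonempty it contains such an angle. For distinct shifts `cᵢ` the translates
`p ↦ f (p + cᵢ)` of a nonzero compactly supported `f` are linearly independent: near the right
end of the support of `f`, the translate by the smallest shift with a nonzero coefficient is
nonzero while all the others vanish.
-/

open Real Filter Topology Function

theorem HasCompactSupport.exists_ne_zero_forall_add_eq_zero {M : Type*} [Zero M] {f : ℝ → M}
    (hf : HasCompactSupport f) (hne : f ≠ 0) (s : Finset ℝ) (hs : ∀ d ∈ s, 0 < d) :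
    ∃ t, f t ≠ 0 ∧ ∀ d ∈ s, f (t + d) = 0 := by
  obtain ⟨t₀, ht₀⟩ := Function.ne_iff.1 hne
  set m := sSup (tsupport f)
  have hm : m ∈ tsupport f := hf.isCompact.sSup_mem ⟨t₀, subset_tsupport f ht₀⟩
  have hbeyond : ∀ u, m < u → f u = 0 := fun u hu =>
    image_eq_zero_of_notMem_tsupport fun h => hu.not_ge (le_csSup hf.isCompact.bddAbove h)
  have hfreq : ∃ᶠ t in 𝓝 m, f t ≠ 0 := mem_closure_iff_frequently.1 hm
  have hshift : ∀ᶠ t in 𝓝 m, ∀ d ∈ s, m < t + d := s.eventually_all.2 fun d hd =>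
    ((continuous_add_const d).tendsto m).eventually (lt_mem_nhds (lt_add_of_pos_right m (hs d hd)))
  obtain ⟨t, ht, htd⟩ := (hfreq.and_eventually hshift).exists
  exact ⟨t, ht, fun d hd => hbeyond _ (htd d hd)⟩

theorem HasCompactSupport.linearIndependent_translates {f : ℝ → ℝ} (hf : HasCompactSupport f)
    (hne : f ≠ 0) {ι : Type*} [Fintype ι] {c : ι → ℝ} (hc : Injective c) :
    LinearIndependent ℝ fun i p => f (p + c i) := by
  classical
  rw [Fintype.linearIndependent_iff]
  intro g hg
  by_contra! ⟨i, hi⟩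
  set S := Finset.univ.filter (g · ≠ 0)
  obtain ⟨i₀, hi₀S, hmin⟩ := S.exists_min_image c ⟨i, by simpa [S] using hi⟩
  have hpos : ∀ d ∈ (S.erase i₀).image (c · - c i₀), 0 < d := by
    simp only [Finset.mem_image, Finset.mem_erase]
    rintro _ ⟨j, ⟨hj, hjS⟩, rfl⟩
    exact sub_pos.2 ((hmin j hjS).lt_of_ne (hc.ne hj).symm)
  obtain ⟨t, ht, hvanish⟩ := hf.exists_ne_zero_forall_add_eq_zero hne _ hpos
  have hsum := congrFun hg (t - c i₀)
  simp only [Finset.sum_apply, Pi.smul_apply, smul_eq_mul, Pi.zero_apply] at hsum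
  rw [Finset.sum_eq_single i₀ _ (by simp)] at hsum
  · exact mul_ne_zero (Finset.mem_filter.1 hi₀S).2 (by simpa using ht) hsum
  · intro j _ hj
    by_cases hgj : g j = 0
    · rw [hgj, zero_mul]
    · have hjS : j ∈ S.erase i₀ := Finset.mem_erase.2 ⟨hj, by simpa [S] using hgj⟩
      rw [show t - c i₀ + c j = t + (c j - c i₀) by ring,
        hvanish _ (Finset.mem_image_of_mem _ hjS), mul_zero]

theorem countable_setOf_cos_mul_add_sin_mul_eq {v w : ℝ × ℝ} (hvw : v ≠ w) :
    {α : ℝ | cos α * v.1 + sin α * v.2 = cos α * w.1 + sin α * w.2}.Countable := by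
  set z : ℂ := ⟨v.1 - w.1, v.2 - w.2⟩
  have hz : z ≠ 0 := fun h => hvw (Prod.ext (sub_eq_zero.1 (congrArg Complex.re h))
    (sub_eq_zero.1 (congrArg Complex.im h)))
  have hpolar : ∀ α, (cos α * v.1 + sin α * v.2) - (cos α * w.1 + sin α * w.2)
      = ‖z‖ * cos (α - Complex.arg z) := fun α => by
    rw [cos_sub, Complex.cos_arg hz, Complex.sin_arg]
    field_simp
    simp only [z]
    ring
  refine (Set.countable_range fun k : ℤ => Complex.arg z + (2 * k + 1) * π / 2).mono ?_
  intro α (hα : _ = _)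
  have hcos : cos (α - Complex.arg z) = 0 := by
    have := hpolar α
    rw [hα, sub_self, eq_comm] at this
    exact (mul_eq_zero.1 this).resolve_left (norm_ne_zero_iff.2 hz)
  obtain ⟨k, hk⟩ := Real.cos_eq_zero_iff.1 hcos
  exact ⟨k, by linarith⟩

theorem countable_setOf_not_injective_cos_mul_add_sin_mul {ι : Type*} [Countable ι]
    {x : ι → ℝ × ℝ} (hx : Injective x) :
    {α : ℝ | ¬ Injective fun i => cos α * (x i).1 + sin α * (x i).2}.Countable := by
  refine (Set.countable_iUnion fun i => Set.countable_iUnion fun j =>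
    Set.countable_iUnion fun hij : i ≠ j => countable_setOf_cos_mul_add_sin_mul_eq
      (hx.ne hij)).mono ?_
  intro α hα
  simp only [Injective, not_forall] at hα
  obtain ⟨i, j, hij, hne⟩ := hα
  exact Set.mem_iUnion₂.2 ⟨i, j, Set.mem_iUnion.2 ⟨hne, hij⟩⟩

theorem translates_linearly_independent_general (K : ℕ) (φ : ℝ → ℝ)
    (hsupp : HasCompactSupport φ)
    (x : Fin K → ℝ × ℝ) (hx : Function.Injective x)
    (Ω : Set ℝ) (hΩo : IsOpen Ω) (hΩne : Ω.Nonempty)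
    (θ : Fin K → ℝ)
    (hder : ∃ t : ℝ, deriv φ t ≠ 0)
    (hzero : ∀ p : ℝ, ∀ α ∈ Ω,
      ∑ i, θ i * deriv φ (p + (Real.cos α * (x i).1 + Real.sin α * (x i).2)) = 0) :
    θ = 0 := by
  obtain ⟨α, hα, hαΩ⟩ := ((countable_setOf_not_injective_cos_mul_add_sin_mul hx).dense_compl
    ℝ).exists_mem_open hΩo hΩne
  have hderiv : deriv φ ≠ 0 := fun h => hder.elim fun t ht => ht (congrFun h t)
  have hindep := hsupp.deriv.linearIndependent_translates hderiv (not_not.1 hα)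
  refine funext (Fintype.linearIndependent_iff.1 hindep θ (funext fun p => ?_))
  simpa using hzero p α hαΩ

/-- If a linear combination of translates `Σ θ_i φ'(p + α⃗·x̌_i)` vanishes for all `p ∈ ℝ` and
all `α` in a nonempty open set `Ω ⊆ [0, 2π]`, where the `x̌_i` are distinct, `φ` is a nonzero
compactly supported `C¹` function and `φ'` is not identically zero, then `θ = 0`. -/
theorem translates_linearly_independent (K : ℕ) (φ : ℝ → ℝ)
    (hφ1 : ContDiff ℝ 1 φ) (hsupp : HasCompactSupport φ) (hφne : φ ≠ 0)
    (x : Fin K → ℝ × ℝ) (hx : Function.Injective x)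
    (Ω : Set ℝ) (hΩo : IsOpen Ω) (hΩne : Ω.Nonempty) (hΩ : Ω ⊆ Set.Icc 0 (2 * Real.pi))
    (θ : Fin K → ℝ)
    (hder : ∃ t : ℝ, deriv φ t ≠ 0)
    (hzero : ∀ p : ℝ, ∀ α ∈ Ω,
      ∑ i, θ i * deriv φ (p + (Real.cos α * (x i).1 + Real.sin α * (x i).2)) = 0) :
    θ = 0 :=
  translates_linearly_independent_general K φ hsupp x hx Ω hΩo hΩne θ hder hzero
end
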